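/- arXiv:nlin/0402038 — 10 statements merged into one kernel-verified Lean document; each statement's English description precedes it below -/
import Mathlib

section
/- Let a, b, f : ℤ² → ℝ and let ψ, θ : ℤ² → ℝ both be solutions of the self-adjoint 5-point scheme with coefficients a, b, f. Then there exists a function α : ℤ² → ℝ such that for all (m,n) ∈ ℤ²: Δ_n α(m,n) = a(m−1,n)·(θ(m,n)ψ(m−1,n) − θ(m−1,n)ψ(m,n)) and Δ_m α(m,n) = −b(m,n−1)·(θ(m,n)ψ(m,n−1) − θ(m,n−1)ψ(m,n)). -/
/-!
The two right-hand sides form a discrete 1-form `P dn + Q dm` on `ℤ²`. Multiplying the scheme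
for `ψ` by `θ(m,n)` and the one for `θ` by `ψ(m,n)` and subtracting, the `f`-terms cancel and
what remains says exactly that this form is closed. On `ℤ²` every closed form is exact: integrate
`Q` along the row `n = 0` and then `P` along each column.
-/

/-- The self-adjoint 5-point scheme. -/
def Is5PointSolution (a b f ψ : ℤ → ℤ → ℝ) : Prop :=
  ∀ m n : ℤ,
    a m n * ψ (m + 1) n + a (m - 1) n * ψ (m - 1) n
      + b m n * ψ m (n + 1) + b m (n - 1) * ψ m (n - 1) = f m n * ψ m n

open Finset

namespace Int

variable {G : Type*} [AddCommGroup G]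

theorem exists_add_one_sub_eq (f : ℤ → G) :
    ∃ g : ℤ → G, g 0 = 0 ∧ ∀ k, g (k + 1) - g k = f k := by
  refine ⟨fun k => ∑ i ∈ Ico 0 k, f i - ∑ i ∈ Ico k 0, f i, by simp, fun k => ?_⟩
  dsimp only
  rcases le_or_gt 0 k with hk | hk
  · rw [← insert_Ico_right_eq_Ico_add_one hk, sum_insert right_notMem_Ico]
    simp [Ico_eq_empty_of_le, hk, Int.le_add_one hk]
  · simp [Ico_eq_empty_of_le, hk.le, Int.add_one_le_of_lt hk,
      ← insert_Ico_add_one_left_eq_Ico hk]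

theorem exists_potential_of_closed (P Q : ℤ → ℤ → G)
    (hclosed : ∀ m n, Q m (n + 1) - Q m n = P (m + 1) n - P m n) :
    ∃ α : ℤ → ℤ → G, ∀ m n, α m (n + 1) - α m n = P m n ∧ α (m + 1) n - α m n = Q m n := by
  obtain ⟨g₀, -, hg₀⟩ := exists_add_one_sub_eq fun m => Q m 0
  choose g hg0 hg using fun m => exists_add_one_sub_eq (P m)
  refine ⟨fun m n => g₀ m + g m n, fun m n => ⟨by simp [hg], ?_⟩⟩
  have hperiodic :
      Function.Periodic (fun n => g₀ (m + 1) + g (m + 1) n - (g₀ m + g m n) - Q m n) 1 := by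
    intro n
    dsimp only
    linear_combination (norm := abel) hg (m + 1) n - hg m n - hclosed m n
  simpa [hg0, hg₀, sub_eq_zero] using hperiodic.int_mul_eq n

end Int

/-- Given two solutions `ψ, θ` of the self-adjoint 5-point scheme, there exists a
potential `α` with
`Δ_n α(m,n) = a(m−1,n)(θ(m,n)ψ(m−1,n) − θ(m−1,n)ψ(m,n))` and
`Δ_m α(m,n) = −b(m,n−1)(θ(m,n)ψ(m,n−1) − θ(m,n−1)ψ(m,n))`. -/
theorem exists_potential_5point
    (a b f ψ θ : ℤ → ℤ → ℝ)
    (hψ : Is5PointSolution a b f ψ) (hθ : Is5PointSolution a b f θ) :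
    ∃ α : ℤ → ℤ → ℝ, ∀ m n : ℤ,
      α m (n + 1) - α m n
        = a (m - 1) n * (θ m n * ψ (m - 1) n - θ (m - 1) n * ψ m n) ∧
      α (m + 1) n - α m n
        = -(b m (n - 1) * (θ m n * ψ m (n - 1) - θ m (n - 1) * ψ m n)) := by
  refine Int.exists_potential_of_closed _ _ fun m n => ?_
  simp only [add_sub_cancel_right]
  linear_combination θ m n * hψ m n - ψ m n * hθ m n
end

section
/- Darboux transformation for the self-adjoint 5-point scheme: let a, b, f : ℤ² → ℝ with a(m,n) ≠ 0 and b(m,n) ≠ 0 for all (m,n), let ψ, θ : ℤ² → ℝ both be solutions of the self-adjoint 5-point scheme with coefficients a, b, f, with θ(m,n) ≠ 0 for all (m,n), and let α : ℤ² → ℝ satisfy Δ_n α(m,n) = a(m−1,n)·(θ(m,n)ψ(m−1,n) − θ(m−1,n)ψ(m,n)) and Δ_m α(m,n) = −b(m,n−1)·(θ(m,n)ψ(m,n−1) − θ(m,n−1)ψ(m,n)) for all (m,n). Define ψ'(m,n) = α(m,n)/θ(m,n), a'(m,n) = θ(m+1,n)/(b(m,n−1)·θ(m,n−1)), b'(m,n)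 = θ(m,n+1)/(a(m−1,n)·θ(m−1,n)), and f'(m,n) = θ(m,n)·[a'(m,n)/θ(m+1,n) + a'(m−1,n)/θ(m−1,n) + b'(m,n)/θ(m,n+1) + b'(m,n−1)/θ(m,n−1)]. Then ψ' is a solution of the self-adjoint 5-point scheme with coefficients a', b', f'. -/
/-- Darboux transformation for the self-adjoint 5-point scheme:
`ψ' = α/θ` solves the 5-point scheme with the transformed coefficients
`a'`, `b'`, `f'`. -/
theorem darboux_5point
    (a b f ψ θ α : ℤ → ℤ → ℝ)
    (ha : ∀ m n : ℤ, a m n ≠ 0) (hb : ∀ m n : ℤ, b m n ≠ 0)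
    (hψ : Is5PointSolution a b f ψ) (hθ : Is5PointSolution a b f θ)
    (hθne : ∀ m n : ℤ, θ m n ≠ 0)
    (hαn : ∀ m n : ℤ, α m (n + 1) - α m n
      = a (m - 1) n * (θ m n * ψ (m - 1) n - θ (m - 1) n * ψ m n))
    (hαm : ∀ m n : ℤ, α (m + 1) n - α m n
      = -(b m (n - 1) * (θ m n * ψ m (n - 1) - θ m (n - 1) * ψ m n)))
    (ψ' a' b' f' : ℤ → ℤ → ℝ)
    (hψ' : ∀ m n : ℤ, ψ' m n = α m n / θ m n)
    (ha' : ∀ m n : ℤ, a' m n = θ (m + 1) n / (b m (n - 1) * θ m (n - 1)))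
    (hb' : ∀ m n : ℤ, b' m n = θ m (n + 1) / (a (m - 1) n * θ (m - 1) n))
    (hf' : ∀ m n : ℤ, f' m n
      = θ m n * (a' m n / θ (m + 1) n + a' (m - 1) n / θ (m - 1) n
        + b' m n / θ m (n + 1) + b' m (n - 1) / θ m (n - 1))) :
    Is5PointSolution a' b' f' ψ' := by
  intro m n
  have e1 := hαm m n
  have e2 := hαm (m - 1) n
  have e3 := hαn m n
  have e4 := hαn m (n - 1)
  simp only [sub_add_cancel] at e2 e4
  have hA1 : α (m + 1) n = α m n
      - b m (n - 1) * (θ m n * ψ m (n - 1) - θ m (n - 1) * ψ m n) := by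
    linarith [e1]
  have hA2 : α (m - 1) n = α m n
      + b (m - 1) (n - 1) * (θ (m - 1) n * ψ (m - 1) (n - 1)
        - θ (m - 1) (n - 1) * ψ (m - 1) n) := by
    linarith [e2]
  have hA3 : α m (n + 1) = α m n
      + a (m - 1) n * (θ m n * ψ (m - 1) n - θ (m - 1) n * ψ m n) := by
    linarith [e3]
  have hA4 : α m (n - 1) = α m n
      - a (m - 1) (n - 1) * (θ m (n - 1) * ψ (m - 1) (n - 1)
        - θ (m - 1) (n - 1) * ψ m (n - 1)) := by
    linarith [e4]
  rw [hψ', hψ', hψ', hψ', hψ', hf', ha', ha', hb', hb']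
  simp only [sub_add_cancel]
  rw [hA1, hA2, hA3, hA4]
  have h1 := hθne (m + 1) n
  have h2 := hθne (m - 1) n
  have h3 := hθne m (n + 1)
  have h4 := hθne m (n - 1)
  have h5 := hθne m n
  have h6 := hθne (m - 1) (n - 1)
  have hb1 := hb m (n - 1)
  have hb2 := hb (m - 1) (n - 1)
  have ha1 := ha (m - 1) n
  have ha2 := ha (m - 1) (n - 1)
  field_simp
  ring
end

section
/- Let a, b, s, f : ℤ² → ℝ and let ψ, θ : ℤ² → ℝ both be solutions of the self-adjoint 7-point scheme with coefficients a, b, s, f. Then for all (m,n) ∈ ℤ²: Δ_m[ a(m−1,n)·(θ(m−1,n)ψ(m,n) − θ(m,n)ψ(m−1,n)) + s(m,n)·(θ(m−1,n)ψ(m,n−1) − θ(m,n−1)ψ(m−1,n)) ] + Δ_n[ b(m,n−1)·(θ(m,n−1)ψ(m,n) − θ(m,n)ψ(m,n−1)) + s(m,n)·(θ(m,n−1)ψ(m−1,n) − θ(m−1,n)ψ(m,n−1)) ] = 0. -/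
/-- The self-adjoint 7-point scheme. -/
def Is7PointSolution (a b s f ψ : ℤ → ℤ → ℝ) : Prop :=
  ∀ m n : ℤ,
    a m n * ψ (m + 1) n + a (m - 1) n * ψ (m - 1) n
      + b m n * ψ m (n + 1) + b m (n - 1) * ψ m (n - 1)
      + s (m + 1) n * ψ (m + 1) (n - 1) + s m (n + 1) * ψ (m - 1) (n + 1)
      = f m n * ψ m n

/-- Given two solutions `ψ, θ` of the self-adjoint 7-point scheme, the resulting
discrete 1-form is closed. -/
theorem closed_discrete_one_form_7point
    (a b s f ψ θ : ℤ → ℤ → ℝ)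
    (hψ : Is7PointSolution a b s f ψ) (hθ : Is7PointSolution a b s f θ) :
    ∀ m n : ℤ,
      ((a ((m + 1) - 1) n * (θ ((m + 1) - 1) n * ψ (m + 1) n - θ (m + 1) n * ψ ((m + 1) - 1) n)
          + s (m + 1) n * (θ ((m + 1) - 1) n * ψ (m + 1) (n - 1)
            - θ (m + 1) (n - 1) * ψ ((m + 1) - 1) n))
        - (a (m - 1) n * (θ (m - 1) n * ψ m n - θ m n * ψ (m - 1) n)
          + s m n * (θ (m - 1) n * ψ m (n - 1) - θ m (n - 1) * ψ (m - 1) n)))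
      + ((b m ((n + 1) - 1) * (θ m ((n + 1) - 1) * ψ m (n + 1) - θ m (n + 1) * ψ m ((n + 1) - 1))
          + s m (n + 1) * (θ m ((n + 1) - 1) * ψ (m - 1) (n + 1)
            - θ (m - 1) (n + 1) * ψ m ((n + 1) - 1)))
        - (b m (n - 1) * (θ m (n - 1) * ψ m n - θ m n * ψ m (n - 1))
          + s m n * (θ m (n - 1) * ψ (m - 1) n - θ (m - 1) n * ψ m (n - 1)))) = 0 := by
  intro m n
  have h1 := hψ m n
  have h2 := hθ m n
  simp only [add_sub_cancel_right] at *
  linear_combination θ m n * h1 - ψ m n * h2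
end

section
/- Darboux transformation for the self-adjoint 7-point scheme: let a, b, s, f : ℤ² → ℝ and let ψ, θ : ℤ² → ℝ both be solutions of the self-adjoint 7-point scheme with coefficients a, b, s, f, with θ(m,n) ≠ 0 for all (m,n). Then there exists ψ' : ℤ² → ℝ such that for all (m,n): Δ_n(ψ'·θ)(m,n) = (a(m−1,n)θ(m,n)θ(m−1,n) + s(m,n)θ(m−1,n)θ(m,n−1))·(ψ(m−1,n)/θ(m−1,n) − ψ(m,n)/θ(m,n)) − s(m,n)θ(m−1,n)θ(m,n−1)·(ψ(m,n−1)/θ(m,n−1) − ψ(m,n)/θ(m,n)) and Δ_m(ψ'·θ)(m,n) = −(b(m,n−1)θ(m,n)θ(m,n−1) + s(m,n)θ(m−1,n)θ(m,n−1))·(ψ(m,n−1)/θ(m,n−1) − ψ(m,n)/θ(m,n)) + s(m,n)θ(m−1,n)θ(m,n−1)·(ψ(m−1,n)/θ(m−1,n) − ψ(m,n)/θ(m,n)). Moreover, set p(m,n) = θ(m,n)a(m−1,n)b(m,n−1) + θ(m−1,n)s(m,n)a(m−1,n) + s(m,n)θ(m,n−1)b(m,n−1) and assume p(m,n) ≠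 0 for all (m,n); then every such ψ' is a solution of the self-adjoint 7-point scheme with coefficients a'(m,n) = θ(m,n)θ(m+1,n)a(m−1,n)/(θ(m,n−1)p(m,n)), b'(m,n) = θ(m,n)θ(m,n+1)b(m,n−1)/(θ(m−1,n)p(m,n)), s'(m,n) = s(m−1,n−1)θ(m−1,n)θ(m,n−1)/(θ(m−1,n−1)p(m−1,n−1)), and f'(m,n) = θ(m,n)·[a'(m,n)/θ(m+1,n) + a'(m−1,n)/θ(m−1,n) + b'(m,n)/θ(m,n+1) + b'(m,n−1)/θ(m,n−1) + s'(m+1,n)/θ(m+1,n−1) + s'(m,n+1)/θ(m−1,n+1)]. -/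
/-- The defining difference equations of the Darboux transform `ψ'` built from the
pair of solutions `(ψ, θ)` of the 7-point scheme. -/
def DarbouxData (a b s ψ θ ψ' : ℤ → ℤ → ℝ) : Prop :=
  ∀ m n : ℤ,
    (ψ' m (n + 1) * θ m (n + 1) - ψ' m n * θ m n
      = (a (m - 1) n * θ m n * θ (m - 1) n + s m n * θ (m - 1) n * θ m (n - 1))
          * (ψ (m - 1) n / θ (m - 1) n - ψ m n / θ m n)
        - s m n * θ (m - 1) n * θ m (n - 1)
          * (ψ m (n - 1) / θ m (n - 1) - ψ m n / θ m n)) ∧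
    (ψ' (m + 1) n * θ (m + 1) n - ψ' m n * θ m n
      = -((b m (n - 1) * θ m n * θ m (n - 1) + s m n * θ (m - 1) n * θ m (n - 1))
          * (ψ m (n - 1) / θ m (n - 1) - ψ m n / θ m n))
        + s m n * θ (m - 1) n * θ m (n - 1)
          * (ψ (m - 1) n / θ (m - 1) n - ψ m n / θ m n))

theorem Int.exists_add_one_sub_eq_s5 {M : Type*} [AddCommGroup M] (g : ℤ → M) :
    ∃ G : ℤ → M, ∀ k, G (k + 1) - G k = g k := by
  refine ⟨fun k => ∑ i ∈ Finset.Ico 0 k, g i - ∑ i ∈ Finset.Ico k 0, g i, fun k => ?_⟩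
  dsimp only
  rcases le_or_gt 0 k with hk | hk
  · rw [← Finset.sum_Ico_add_eq_sum_Ico_add_one hk, Finset.Ico_eq_empty_of_le hk,
      Finset.Ico_eq_empty_of_le (by omega : (0 : ℤ) ≤ k + 1)]
    abel
  · rw [← Finset.insert_Ico_add_one_left_eq_Ico hk, Finset.sum_insert (by simp),
      Finset.Ico_eq_empty_of_le hk.le, Finset.Ico_eq_empty_of_le (by omega : k + 1 ≤ 0)]
    abel

def IsDiscretePotential {M : Type*} [AddCommGroup M] (φ F G : ℤ → ℤ → M) : Prop :=
  ∀ m n, φ m (n + 1) - φ m n = F m n ∧ φ (m + 1) n - φ m n = G m n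

theorem exists_isDiscretePotential {M : Type*} [AddCommGroup M] {F G : ℤ → ℤ → M}
    (hFG : ∀ m n, F (m + 1) n - F m n = G m (n + 1) - G m n) :
    ∃ φ, IsDiscretePotential φ F G := by
  obtain ⟨Φ₀, hΦ₀⟩ := Int.exists_add_one_sub_eq_s5 fun m => G m 0
  choose Φ hΦ using fun m => Int.exists_add_one_sub_eq_s5 (F m)
  refine ⟨fun m n => Φ₀ m + (Φ m n - Φ m 0), fun m n => ⟨?_, ?_⟩⟩
  · beta_reduce
    rw [← hΦ]
    abel
  · have hper : Function.Periodic (fun n => Φ (m + 1) n - Φ m n - G m n) 1 := fun n => by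
      beta_reduce
      linear_combination (norm := abel) hΦ (m + 1) n - hΦ m n + hFG m n
    have hn := hper.int_mul_eq n
    simp only [Int.cast_id, mul_one] at hn
    beta_reduce
    linear_combination (norm := abel) hΦ₀ m + hn

noncomputable def rowSum (α β σ : ℤ → ℤ → ℝ) (m n : ℤ) : ℝ :=
  α m n + α (m - 1) n + β m n + β m (n - 1) + σ (m + 1) n + σ m (n + 1)

/-- `f'` is exactly the coefficient for which `1 / θ` solves the primed scheme. -/
theorem Is7PointSolution.of_mul {a' b' s' f' α β σ θ ψ' : ℤ → ℤ → ℝ} (hθ : ∀ m n, θ m n ≠ 0)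
    (ha' : ∀ m n, a' m n = θ m n * θ (m + 1) n * α m n)
    (hb' : ∀ m n, b' m n = θ m n * θ m (n + 1) * β m n)
    (hs' : ∀ m n, s' m n = θ (m - 1) n * θ m (n - 1) * σ m n)
    (hf' : ∀ m n, f' m n
      = θ m n * (a' m n / θ (m + 1) n + a' (m - 1) n / θ (m - 1) n
        + b' m n / θ m (n + 1) + b' m (n - 1) / θ m (n - 1)
        + s' (m + 1) n / θ (m + 1) (n - 1) + s' m (n + 1) / θ (m - 1) (n + 1)))
    (h : Is7PointSolution α β σ (rowSum α β σ) (ψ' * θ)) :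
    Is7PointSolution a' b' s' f' ψ' := by
  intro m n
  have h := h m n
  simp only [Pi.mul_apply, rowSum] at h
  rw [hf']
  simp only [ha', hb', hs', sub_add_cancel, add_sub_cancel_right]
  field_simp [hθ]
  linear_combination h

namespace Darboux

variable (a b s θ r : ℤ → ℤ → ℝ)

def fluxN (m n : ℤ) : ℝ :=
  (a (m - 1) n * θ m n * θ (m - 1) n + s m n * θ (m - 1) n * θ m (n - 1))
      * (r (m - 1) n - r m n)
    - s m n * θ (m - 1) n * θ m (n - 1) * (r m (n - 1) - r m n)

def fluxM (m n : ℤ) : ℝ :=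
  -((b m (n - 1) * θ m n * θ m (n - 1) + s m n * θ (m - 1) n * θ m (n - 1))
      * (r m (n - 1) - r m n))
    + s m n * θ (m - 1) n * θ m (n - 1) * (r (m - 1) n - r m n)

theorem darbouxData_iff (ψ ψ' : ℤ → ℤ → ℝ) :
    DarbouxData a b s ψ θ ψ' ↔
      IsDiscretePotential (ψ' * θ) (fluxN a s θ (ψ / θ)) (fluxM b s θ (ψ / θ)) :=
  Iff.rfl

theorem fluxN_sub_eq_fluxM_sub {f : ℤ → ℤ → ℝ} (hθ : Is7PointSolution a b s f θ)
    (hrθ : Is7PointSolution a b s f (r * θ)) (m n : ℤ) :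
    fluxN a s θ r (m + 1) n - fluxN a s θ r m n
      = fluxM b s θ r m (n + 1) - fluxM b s θ r m n := by
  have h := hrθ m n
  simp only [Pi.mul_apply] at h
  simp only [fluxN, fluxM, add_sub_cancel_right]
  linear_combination (-θ m n) * (h - r m n * hθ m n)

def denom (m n : ℤ) : ℝ :=
  θ m n * a (m - 1) n * b m (n - 1) + θ (m - 1) n * s m n * a (m - 1) n
    + s m n * θ m (n - 1) * b m (n - 1)

noncomputable def alpha (m n : ℤ) : ℝ := a (m - 1) n / (θ m (n - 1) * denom a b s θ m n)

noncomputable def beta (m n : ℤ) : ℝ := b m (n - 1) / (θ (m - 1) n * denom a b s θ m n)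

noncomputable def sigma (m n : ℤ) : ℝ :=
  s (m - 1) (n - 1) / (θ (m - 1) (n - 1) * denom a b s θ (m - 1) (n - 1))

variable {a b s θ} {m n : ℤ}

theorem beta_mul_fluxN_add_alpha_mul_fluxM (hv : θ (m - 1) n ≠ 0) (hw : θ m (n - 1) ≠ 0)
    (hp : denom a b s θ m n ≠ 0) :
    beta a b s θ m n * fluxN a s θ r m n + alpha a b s θ m n * fluxM b s θ r m n
      = r (m - 1) n - r m (n - 1) := by
  unfold alpha beta fluxN fluxM
  field_simp
  unfold denom
  ring

theorem sigma_mul_fluxN_sub_fluxM_sub_alpha_mul_fluxM (hu : θ m n ≠ 0) (hw : θ m (n - 1) ≠ 0)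
    (hp : denom a b s θ m n ≠ 0) :
    sigma a b s θ (m + 1) (n + 1) * (fluxN a s θ r m n - fluxM b s θ r m n)
      - alpha a b s θ m n * fluxM b s θ r m n = r m (n - 1) - r m n := by
  simp only [alpha, sigma, fluxN, fluxM, add_sub_cancel_right]
  field_simp
  unfold denom
  ring

theorem sigma_mul_fluxM_sub_fluxN_sub_beta_mul_fluxN (hu : θ m n ≠ 0) (hv : θ (m - 1) n ≠ 0)
    (hp : denom a b s θ m n ≠ 0) :
    sigma a b s θ (m + 1) (n + 1) * (fluxM b s θ r m n - fluxN a s θ r m n)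
      - beta a b s θ m n * fluxN a s θ r m n = r m n - r (m - 1) n := by
  simp only [beta, sigma, fluxN, fluxM, add_sub_cancel_right]
  field_simp
  unfold denom
  ring

variable (a b s θ)

theorem is7PointSolution_of_isDiscretePotential {φ : ℤ → ℤ → ℝ} (hθ : ∀ m n, θ m n ≠ 0)
    (hp : ∀ m n, denom a b s θ m n ≠ 0)
    (hφ : IsDiscretePotential φ (fluxN a s θ r) (fluxM b s θ r)) :
    Is7PointSolution (alpha a b s θ) (beta a b s θ) (sigma a b s θ)
      (rowSum (alpha a b s θ) (beta a b s θ) (sigma a b s θ)) φ := by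
  intro m n
  obtain ⟨hN, hM⟩ := hφ m n
  obtain ⟨hNw, hMw⟩ := hφ (m - 1) n
  obtain ⟨hNs, hMs⟩ := hφ m (n - 1)
  have diag := beta_mul_fluxN_add_alpha_mul_fluxM r (hθ _ _) (hθ _ _) (hp m n)
  have west := sigma_mul_fluxN_sub_fluxM_sub_alpha_mul_fluxM r (hθ _ _) (hθ _ _) (hp (m - 1) n)
  have south := sigma_mul_fluxM_sub_fluxN_sub_beta_mul_fluxN r (hθ _ _) (hθ _ _) (hp m (n - 1))
  simp only [sub_add_cancel] at hNw hMw hNs hMs west south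
  unfold rowSum
  linear_combination alpha a b s θ m n * hM + beta a b s θ m n * hN
    - alpha a b s θ (m - 1) n * hMw + sigma a b s θ m (n + 1) * (hNw - hMw)
    - beta a b s θ m (n - 1) * hNs + sigma a b s θ (m + 1) n * (hMs - hNs) + diag + west + south

end Darboux

open Darboux

/-- Darboux transformation for the self-adjoint 7-point scheme:
a transform `ψ'` exists, and (provided `p ≠ 0` everywhere) every such `ψ'` solves
the 7-point scheme with the transformed coefficients `a'`, `b'`, `s'`, `f'`. -/
theorem darboux_7point
    (a b s f ψ θ : ℤ → ℤ → ℝ)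
    (hψ : Is7PointSolution a b s f ψ) (hθ : Is7PointSolution a b s f θ)
    (hθne : ∀ m n : ℤ, θ m n ≠ 0)
    (p : ℤ → ℤ → ℝ)
    (hp : ∀ m n : ℤ, p m n
      = θ m n * a (m - 1) n * b m (n - 1) + θ (m - 1) n * s m n * a (m - 1) n
        + s m n * θ m (n - 1) * b m (n - 1)) :
    (∃ ψ' : ℤ → ℤ → ℝ, DarbouxData a b s ψ θ ψ') ∧
    ((∀ m n : ℤ, p m n ≠ 0) →
      ∀ a' b' s' f' : ℤ → ℤ → ℝ,
        (∀ m n : ℤ, a' m n = θ m n * θ (m + 1) n * a (m - 1) n / (θ m (n - 1) * p m n)) →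
        (∀ m n : ℤ, b' m n = θ m n * θ m (n + 1) * b m (n - 1) / (θ (m - 1) n * p m n)) →
        (∀ m n : ℤ, s' m n
          = s (m - 1) (n - 1) * θ (m - 1) n * θ m (n - 1) / (θ (m - 1) (n - 1) * p (m - 1) (n - 1))) →
        (∀ m n : ℤ, f' m n
          = θ m n * (a' m n / θ (m + 1) n + a' (m - 1) n / θ (m - 1) n
            + b' m n / θ m (n + 1) + b' m (n - 1) / θ m (n - 1)
            + s' (m + 1) n / θ (m + 1) (n - 1) + s' m (n + 1) / θ (m - 1) (n + 1))) →
        ∀ ψ' : ℤ → ℤ → ℝ, DarbouxData a b s ψ θ ψ' →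
          Is7PointSolution a' b' s' f' ψ') := by
  have div_mul_θ (g : ℤ → ℤ → ℝ) : g / θ * θ = g := funext₂ fun m n => div_mul_cancel₀ _ (hθne m n)
  obtain rfl : p = denom a b s θ := funext₂ hp
  refine ⟨?_, fun hpne a' b' s' f' ha' hb' hs' hf' ψ' hψ' => ?_⟩
  · obtain ⟨φ, hφ⟩ := exists_isDiscretePotential
      (fluxN_sub_eq_fluxM_sub a b s θ (ψ / θ) hθ ((div_mul_θ ψ).symm ▸ hψ))
    exact ⟨φ / θ, (darbouxData_iff a b s θ ψ _).2 ((div_mul_θ φ).symm ▸ hφ)⟩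
  · refine Is7PointSolution.of_mul hθne (fun m n => ?_) (fun m n => ?_) (fun m n => ?_) hf'
      (is7PointSolution_of_isDiscretePotential a b s θ _ hθne hpne
        ((darbouxData_iff a b s θ ψ ψ').1 hψ'))
    · rw [ha', alpha]; ring
    · rw [hb', beta]; ring
    · rw [hs', sigma]; ring
end

section
/- Let N, R : ℝ² → ℝ³ be twice continuously differentiable with ⟨N(p), R_x(p)⟩ = 0, ⟨N(p), R_y(p)⟩ = 0 and det(N(p), N_x(p), N_y(p)) ≠ 0 for every p ∈ ℝ². Then there exist functions A, S, B : ℝ² → ℝ such that at every point R_y = A·(N × N_x) + S·(N × N_y) and R_x = −S·(N × N_x) − B·(N × N_y); moreover, for any such A, S, B one has R_x × R_y = (A·B − S²)·det(N, N_x, N_y)·N at every point. (In particular the single function S appears in both decompositions: the mixed coefficients P and Q of the a priori decompositions R_y = A(N×N_x) + P(N×N_y), R_x = −Q(N×N_x) − B(N×N_y) coincide.) -/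
/-!
Differentiating `⟨N, R_x⟩ = 0` in `y` and `⟨N, R_y⟩ = 0` in `x` and using the symmetry of
`R_xy` gives `⟨N_x, R_y⟩ = ⟨N_y, R_x⟩`. A vector `v ⟂ N` expands over `N × N_x`, `N × N_y`
with coefficients `⟨v, N_y⟩ / d` and `-⟨v, N_x⟩ / d`, where `d = det(N, N_x, N_y)`, so the two
mixed coefficients coincide. The cross product formula follows by bilinearity from
`(N × N_x) × (N × N_y) = d · N`.
-/

open Matrix

/-- Partial derivative with respect to the first coordinate. -/
noncomputable def pdx (f : ℝ × ℝ → (Fin 3 → ℝ)) (p : ℝ × ℝ) : Fin 3 → ℝ :=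
  fderiv ℝ f p (1, 0)

/-- Partial derivative with respect to the second coordinate. -/
noncomputable def pdy (f : ℝ × ℝ → (Fin 3 → ℝ)) (p : ℝ × ℝ) : Fin 3 → ℝ :=
  fderiv ℝ f p (0, 1)

/-- Determinant of the 3×3 matrix with rows `u`, `v`, `w`. -/
noncomputable def det3 (u v w : Fin 3 → ℝ) : ℝ :=
  (Matrix.of ![u, v, w]).det

section
variable {E : Type*} [NormedAddCommGroup E] [NormedSpace ℝ E] {ι : Type*} [Fintype ι]

theorem HasFDerivAt.dotProduct {f g : E → ι → ℝ} {f' g' : E →L[ℝ] ι → ℝ} {x : E}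
    (hf : HasFDerivAt f f' x) (hg : HasFDerivAt g g' x) :
    HasFDerivAt (fun y => f y ⬝ᵥ g y)
      (∑ i, (f x i • (ContinuousLinearMap.proj i).comp g'
        + g x i • (ContinuousLinearMap.proj i).comp f')) x :=
  HasFDerivAt.fun_sum fun i _ => (hasFDerivAt_pi'.1 hf i).mul (hasFDerivAt_pi'.1 hg i)

theorem fderiv_dotProduct_apply {f g : E → ι → ℝ} {x : E} (hf : DifferentiableAt ℝ f x)
    (hg : DifferentiableAt ℝ g x) (v : E) :
    fderiv ℝ (fun y => f y ⬝ᵥ g y) x v = f x ⬝ᵥ fderiv ℝ g x v + fderiv ℝ f x v ⬝ᵥ g x := by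
  rw [(hf.hasFDerivAt.dotProduct hg.hasFDerivAt).fderiv]
  simp [dotProduct, Finset.sum_add_distrib, mul_comm]

theorem fderiv_dotProduct_fderiv_add_dotProduct_fderiv_fderiv_eq_zero {N R : E → ι → ℝ} {x : E}
    (hN : DifferentiableAt ℝ N x) (hR : DifferentiableAt ℝ (fderiv ℝ R) x) {w : E}
    (hw : ∀ y, N y ⬝ᵥ fderiv ℝ R y w = 0) (v : E) :
    fderiv ℝ N x v ⬝ᵥ fderiv ℝ R x w + N x ⬝ᵥ fderiv ℝ (fderiv ℝ R) x v w = 0 := by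
  have hRw : DifferentiableAt ℝ (fun y => fderiv ℝ R y w) x := by fun_prop
  have h := fderiv_dotProduct_apply hN hRw v
  rw [show (fun y => N y ⬝ᵥ fderiv ℝ R y w) = fun _ => 0 from funext hw, fderiv_fun_const,
    fderiv_clm_apply hR (differentiableAt_const w)] at h
  simpa [add_comm] using h.symm

theorem fderiv_dotProduct_fderiv_comm {N R : E → ι → ℝ} {x : E}
    (hN : DifferentiableAt ℝ N x) (hR : DifferentiableAt ℝ (fderiv ℝ R) x)
    (hsymm : IsSymmSndFDerivAt ℝ R x) {v w : E}
    (hv : ∀ y, N y ⬝ᵥ fderiv ℝ R y v = 0) (hw : ∀ y, N y ⬝ᵥ fderiv ℝ R y w = 0) :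
    fderiv ℝ N x v ⬝ᵥ fderiv ℝ R x w = fderiv ℝ N x w ⬝ᵥ fderiv ℝ R x v := by
  have h₁ := fderiv_dotProduct_fderiv_add_dotProduct_fderiv_fderiv_eq_zero hN hR hw v
  have h₂ := fderiv_dotProduct_fderiv_add_dotProduct_fderiv_fderiv_eq_zero hN hR hv w
  rw [hsymm v w] at h₁
  linarith
end

theorem cross_cross_cross_eq_det3_smul (n x y : Fin 3 → ℝ) :
    (n ⨯₃ x) ⨯₃ (n ⨯₃ y) = det3 n x y • n := by
  rw [cross_cross_eq_smul_sub_smul', dot_self_cross, zero_smul, sub_zero, dotProduct_comm,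
    triple_product_permutation, triple_product_eq_det]
  rfl

theorem neg_smul_sub_smul_cross_smul_add_smul (n x y : Fin 3 → ℝ) (a s b : ℝ) :
    (-(s • (n ⨯₃ x)) - b • (n ⨯₃ y)) ⨯₃ (a • (n ⨯₃ x) + s • (n ⨯₃ y))
      = ((a * b - s ^ 2) * det3 n x y) • n := by
  have hyx : (n ⨯₃ y) ⨯₃ (n ⨯₃ x) = -(det3 n x y • n) := by
    rw [← cross_anticomm, cross_cross_cross_eq_det3_smul]
  simp only [map_sub, map_neg, map_smul, map_add, LinearMap.sub_apply, LinearMap.neg_apply,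
    LinearMap.smul_apply, cross_self, cross_cross_cross_eq_det3_smul, hyx]
  module

theorem det3_smul_eq_sum_smul_cross (n x y v : Fin 3 → ℝ) :
    det3 n x y • v
      = (v ⬝ᵥ y) • (n ⨯₃ x) - (v ⬝ᵥ x) • (n ⨯₃ y) + (n ⬝ᵥ v) • (x ⨯₃ y) := by
  ext i
  fin_cases i <;>
    simp [det3, crossProduct, dotProduct, Fin.sum_univ_three, Matrix.det_fin_three] <;> ring

theorem eq_smul_cross_sub_smul_cross {n x y v : Fin 3 → ℝ} (hv : n ⬝ᵥ v = 0)
    (hd : det3 n x y ≠ 0) :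
    v = ((v ⬝ᵥ y) / det3 n x y) • (n ⨯₃ x) - ((v ⬝ᵥ x) / det3 n x y) • (n ⨯₃ y) := by
  have h := det3_smul_eq_sum_smul_cross n x y v
  rw [hv, zero_smul, add_zero] at h
  rw [div_eq_inv_mul, div_eq_inv_mul, mul_smul, mul_smul, ← smul_sub, ← h, inv_smul_smul₀ hd]

theorem pdx_dotProduct_pdy_comm {N R : ℝ × ℝ → (Fin 3 → ℝ)}
    (hN : ContDiff ℝ 2 N) (hR : ContDiff ℝ 2 R)
    (hx : ∀ p, N p ⬝ᵥ pdx R p = 0) (hy : ∀ p, N p ⬝ᵥ pdy R p = 0) (p : ℝ × ℝ) :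
    pdx N p ⬝ᵥ pdy R p = pdy N p ⬝ᵥ pdx R p :=
  fderiv_dotProduct_fderiv_comm (hN.differentiable (by norm_num) p)
    ((hR.fderiv_right (m := 1) (by norm_num)).differentiable (by norm_num) p)
    (hR.contDiffAt.isSymmSndFDerivAt (by simp)) hx hy

/-- Lelieuvre decomposition for a generic surface: the tangent vectors `R_x`, `R_y`
decompose over `N × N_x`, `N × N_y` with a single mixed coefficient `S`, and for any
such decomposition `R_x × R_y = (AB − S²)·det(N, N_x, N_y)·N`. -/
theorem lelieuvre_decomposition_surface
    (N R : ℝ × ℝ → (Fin 3 → ℝ))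
    (hN : ContDiff ℝ 2 N) (hR : ContDiff ℝ 2 R)
    (hx : ∀ p, N p ⬝ᵥ pdx R p = 0) (hy : ∀ p, N p ⬝ᵥ pdy R p = 0)
    (hreg : ∀ p, det3 (N p) (pdx N p) (pdy N p) ≠ 0) :
    (∃ A S B : ℝ × ℝ → ℝ, ∀ p,
        pdy R p = A p • (N p ⨯₃ pdx N p) + S p • (N p ⨯₃ pdy N p) ∧
        pdx R p = -(S p • (N p ⨯₃ pdx N p)) - B p • (N p ⨯₃ pdy N p)) ∧
    (∀ A S B : ℝ × ℝ → ℝ,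
      (∀ p, pdy R p = A p • (N p ⨯₃ pdx N p) + S p • (N p ⨯₃ pdy N p) ∧
            pdx R p = -(S p • (N p ⨯₃ pdx N p)) - B p • (N p ⨯₃ pdy N p)) →
      ∀ p, pdx R p ⨯₃ pdy R p
        = ((A p * B p - S p ^ 2) * det3 (N p) (pdx N p) (pdy N p)) • N p) := by
  refine ⟨?_, fun A S B hdecomp p => ?_⟩
  · refine ⟨fun p => (pdy R p ⬝ᵥ pdy N p) / det3 (N p) (pdx N p) (pdy N p),
      fun p => -(pdy R p ⬝ᵥ pdx N p) / det3 (N p) (pdx N p) (pdy N p),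
      fun p => (pdx R p ⬝ᵥ pdx N p) / det3 (N p) (pdx N p) (pdy N p), fun p => ⟨?_, ?_⟩⟩
    · convert eq_smul_cross_sub_smul_cross (hy p) (hreg p) using 1
      module
    · have hmixed : pdx R p ⬝ᵥ pdy N p = pdy R p ⬝ᵥ pdx N p := by
        rw [dotProduct_comm, ← pdx_dotProduct_pdy_comm hN hR hx hy p, dotProduct_comm]
      convert eq_smul_cross_sub_smul_cross (hx p) (hreg p) using 1
      rw [hmixed]
      module
  · obtain ⟨hRy, hRx⟩ := hdecomp p
    rw [hRy, hRx]
    exact neg_smul_sub_smul_cross_smul_add_smul _ _ _ _ _ _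
end

section
/- Let N, R : ℝ² → ℝ³ be twice continuously differentiable with ⟨N, R_x⟩ = 0, ⟨N, R_y⟩ = 0 and det(N, N_x, N_y) ≠ 0 everywhere, and let A, S, B : ℝ² → ℝ be differentiable functions such that R_y = A·(N × N_x) + S·(N × N_y) and R_x = −S·(N × N_x) − B·(N × N_y) everywhere. Then there exists a function F : ℝ² → ℝ such that (A·N_x)_x + (S·N_y)_x + (B·N_y)_y + (S·N_x)_y = F·N at every point; i.e., any co-normal field of a regular twice differentiable locally strongly convex surface satisfies the most general second-order self-adjoint linear partial differential equation in two variables. -/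
/-!
Put `L = A N_x + S N_y` and `M = B N_y + S N_x`, so that the decomposition reads `R_y = N × L` and
`R_x = M × N`. Equality of the mixed partials of `R` gives
`N_x × L + N × L_x = M_y × N + M × N_y`. Since the coefficient matrix `[[A, S], [S, B]]` is
symmetric, `N_x × L = S (N_x × N_y) = M × N_y`, hence `N × (L_x + M_y) = 0`. Regularity forces
`N ≠ 0`, so `L_x + M_y` is a multiple of `N`.
-/

open Matrix

section CrossProduct

variable {R : Type*}

lemma cross_smul_add_smul_eq [CommRing R] (u v : Fin 3 → R) (a s b : R) :
    u ⨯₃ (a • u + s • v) = (b • v + s • u) ⨯₃ v := by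
  simp [cross_self]

lemma exists_smul_eq_of_cross_eq_zero [Field R] [LinearOrder R] [IsStrictOrderedRing R]
    {u v : Fin 3 → R} (hu : u ≠ 0) (h : u ⨯₃ v = 0) : ∃ c : R, v = c • u := by
  have huu : u ⬝ᵥ u ≠ 0 := mt dotProduct_self_eq_zero.mp hu
  have key := cross_cross_eq_smul_sub_smul u v u
  rw [h, map_zero, LinearMap.zero_apply, eq_comm, sub_eq_zero] at key
  exact ⟨(v ⬝ᵥ u) / (u ⬝ᵥ u), by rw [div_eq_inv_mul, mul_smul, ← key, inv_smul_smul₀ huu]⟩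

end CrossProduct

lemma ne_zero_of_det3_ne_zero {u v w : Fin 3 → ℝ} (h : det3 u v w ≠ 0) : u ≠ 0 := by
  rintro rfl
  exact h (det_eq_zero_of_row_eq_zero 0 fun _ => rfl)

noncomputable def crossProductCLM : (Fin 3 → ℝ) →L[ℝ] (Fin 3 → ℝ) →L[ℝ] Fin 3 → ℝ :=
  LinearMap.toContinuousLinearMap (LinearMap.toContinuousLinearMap.toLinearMap ∘ₗ crossProduct)

@[simp]
lemma crossProductCLM_apply (u v : Fin 3 → ℝ) : crossProductCLM u v = u ⨯₃ v := rfl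

section Calculus

variable {E F : Type*} [NormedAddCommGroup E] [NormedSpace ℝ E]
  [NormedAddCommGroup F] [NormedSpace ℝ F]

lemma fderiv_cross_apply {f g : E → Fin 3 → ℝ} {x : E} (hf : DifferentiableAt ℝ f x)
    (hg : DifferentiableAt ℝ g x) (v : E) :
    fderiv ℝ (fun y => f y ⨯₃ g y) x v = fderiv ℝ f x v ⨯₃ g x + f x ⨯₃ fderiv ℝ g x v := by
  have h := crossProductCLM.fderiv_of_bilinear hf hg
  simp only [crossProductCLM_apply] at h
  rw [h, add_comm]
  rfl

lemma ContDiff.differentiable_fderiv_apply {f : E → F} (hf : ContDiff ℝ 2 f) (v : E) :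
    Differentiable ℝ (fun x => fderiv ℝ f x v) :=
  ((hf.fderiv_right le_rfl).clm_apply contDiff_const).differentiable one_ne_zero

lemma ContDiff.fderiv_fderiv_apply_comm {f : E → F} (hf : ContDiff ℝ 2 f) (x v w : E) :
    fderiv ℝ (fun y => fderiv ℝ f y w) x v = fderiv ℝ (fun y => fderiv ℝ f y v) x w := by
  have hdf : DifferentiableAt ℝ (fderiv ℝ f) x :=
    (hf.fderiv_right le_rfl).differentiable one_ne_zero x
  rw [fderiv_clm_apply hdf (differentiableAt_const w),
    fderiv_clm_apply hdf (differentiableAt_const v)]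
  simpa using hf.contDiffAt.isSymmSndFDerivAt (by simp) v w

end Calculus

section PartialDerivatives

variable {f g : ℝ × ℝ → Fin 3 → ℝ} {p : ℝ × ℝ}

lemma pdx_add (hf : DifferentiableAt ℝ f p) (hg : DifferentiableAt ℝ g p) :
    pdx (fun q => f q + g q) p = pdx f p + pdx g p := by
  rw [pdx, fderiv_fun_add hf hg]
  rfl

lemma pdy_add (hf : DifferentiableAt ℝ f p) (hg : DifferentiableAt ℝ g p) :
    pdy (fun q => f q + g q) p = pdy f p + pdy g p := by
  rw [pdy, fderiv_fun_add hf hg]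
  rfl

lemma pdx_cross (hf : DifferentiableAt ℝ f p) (hg : DifferentiableAt ℝ g p) :
    pdx (fun q => f q ⨯₃ g q) p = pdx f p ⨯₃ g p + f p ⨯₃ pdx g p :=
  fderiv_cross_apply hf hg _

lemma pdy_cross (hf : DifferentiableAt ℝ f p) (hg : DifferentiableAt ℝ g p) :
    pdy (fun q => f q ⨯₃ g q) p = pdy f p ⨯₃ g p + f p ⨯₃ pdy g p :=
  fderiv_cross_apply hf hg _

lemma ContDiff.pdx_pdy_comm (hf : ContDiff ℝ 2 f) (p : ℝ × ℝ) :
    pdx (pdy f) p = pdy (pdx f) p :=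
  hf.fderiv_fderiv_apply_comm p _ _

end PartialDerivatives

theorem conormal_satisfies_selfadjoint_pde_general
    (N R : ℝ × ℝ → (Fin 3 → ℝ)) (A S B : ℝ × ℝ → ℝ)
    (hN : ContDiff ℝ 2 N) (hR : ContDiff ℝ 2 R)
    (hA : Differentiable ℝ A) (hS : Differentiable ℝ S) (hB : Differentiable ℝ B)
    (hreg : ∀ p, det3 (N p) (pdx N p) (pdy N p) ≠ 0)
    (hdec : ∀ p, pdy R p = A p • (N p ⨯₃ pdx N p) + S p • (N p ⨯₃ pdy N p) ∧
                 pdx R p = -(S p • (N p ⨯₃ pdx N p)) - B p • (N p ⨯₃ pdy N p)) :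
    ∃ F : ℝ × ℝ → ℝ, ∀ p,
      pdx (fun q => A q • pdx N q) p + pdx (fun q => S q • pdy N q) p
        + pdy (fun q => B q • pdy N q) p + pdy (fun q => S q • pdx N q) p
      = F p • N p := by
  have hNd : Differentiable ℝ N := hN.differentiable (by simp)
  have hNx : Differentiable ℝ (pdx N) := hN.differentiable_fderiv_apply _
  have hNy : Differentiable ℝ (pdy N) := hN.differentiable_fderiv_apply _
  set L := fun q => A q • pdx N q + S q • pdy N q
  set M := fun q => B q • pdy N q + S q • pdx N q
  have hRy : pdy R = fun q => N q ⨯₃ L q := by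
    funext q; simp [(hdec q).1, L]
  have hRx : pdx R = fun q => M q ⨯₃ N q := by
    funext q
    rw [(hdec q).2, ← cross_anticomm (N q)]
    simp only [M, map_add, map_smul]
    module
  suffices ∀ p, ∃ c : ℝ, pdx L p + pdy M p = c • N p by
    choose F hF using this
    refine ⟨F, fun p => ?_⟩
    have hLx : pdx L p = pdx (fun q => A q • pdx N q) p + pdx (fun q => S q • pdy N q) p :=
      pdx_add (hA.smul hNx p) (hS.smul hNy p)
    have hMy : pdy M p = pdy (fun q => B q • pdy N q) p + pdy (fun q => S q • pdx N q) p :=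
      pdy_add (hB.smul hNy p) (hS.smul hNx p)
    rw [add_assoc, ← hLx, ← hMy, hF]
  intro p
  refine exists_smul_eq_of_cross_eq_zero (ne_zero_of_det3_ne_zero (hreg p)) ?_
  have hL : Differentiable ℝ L := (hA.smul hNx).add (hS.smul hNy)
  have hM : Differentiable ℝ M := (hB.smul hNy).add (hS.smul hNx)
  have hmixed : pdx (pdy R) p = pdy (pdx R) p := hR.pdx_pdy_comm p
  have hcancel : pdx N p ⨯₃ L p = M p ⨯₃ pdy N p := cross_smul_add_smul_eq _ _ _ _ _
  rw [hRy, hRx, pdx_cross (hNd p) (hL p), pdy_cross (hM p) (hNd p), hcancel] at hmixed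
  rw [map_add, ← cross_anticomm (pdy M p)]
  linear_combination (norm := module) hmixed

/-- A co-normal field of a regular, twice differentiable, locally strongly convex
surface satisfies the most general second-order self-adjoint linear PDE in two
variables: `(A N_x)_x + (S N_y)_x + (B N_y)_y + (S N_x)_y = F N`. -/
theorem conormal_satisfies_selfadjoint_pde
    (N R : ℝ × ℝ → (Fin 3 → ℝ)) (A S B : ℝ × ℝ → ℝ)
    (hN : ContDiff ℝ 2 N) (hR : ContDiff ℝ 2 R)
    (hA : Differentiable ℝ A) (hS : Differentiable ℝ S) (hB : Differentiable ℝ B)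
    (hx : ∀ p, N p ⬝ᵥ pdx R p = 0) (hy : ∀ p, N p ⬝ᵥ pdy R p = 0)
    (hreg : ∀ p, det3 (N p) (pdx N p) (pdy N p) ≠ 0)
    (hdec : ∀ p, pdy R p = A p • (N p ⨯₃ pdx N p) + S p • (N p ⨯₃ pdy N p) ∧
                 pdx R p = -(S p • (N p ⨯₃ pdx N p)) - B p • (N p ⨯₃ pdy N p)) :
    ∃ F : ℝ × ℝ → ℝ, ∀ p,
      pdx (fun q => A q • pdx N q) p + pdx (fun q => S q • pdy N q) p
        + pdy (fun q => B q • pdy N q) p + pdy (fun q => S q • pdx N q) p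
      = F p • N p :=
  conormal_satisfies_selfadjoint_pde_general N R A S B hN hR hA hS hB hreg hdec
end

section
/- Discrete Lelieuvre decomposition for a generic 2D lattice: let r, n : ℤ² → ℝ³ satisfy ⟨n(m,n), Δ_m r(m,n)⟩ = 0 and ⟨n(m,n), Δ_n r(m,n)⟩ = 0 for all (m,n) (n is a co-normal field to the lower triangles), and assume V(m,n) := det(n(m,n), n(m+1,n), n(m,n+1)) ≠ 0 for all (m,n). Then ⟨n(m,n), Δ_n r(m+1,n)⟩ = ⟨n(m,n), Δ_m r(m,n+1)⟩ for all (m,n), and the functions a(m,n) = −⟨n(m,n+1), Δ_n r(m+1,n)⟩ / V(m,n), b(m,n) = −⟨n(m+1,n), Δ_m r(m,n+1)⟩ / V(m,n), s(m,n) = ⟨n(m,n), Δ_n r(m+1,n)⟩ / V(m,n) satisfy, for all (m,n), the discrete Lelieuvre relations: Δ_n r(m,n) = n(m,n) × ( a(m−1,n)·n(m−1,n) + s(m−1,n)·n(m−1,n+1) ) and Δ_m r(m,n) = −n(m,n) × ( b(m,n−1)·n(m,n−1) + s(m,n−1)·n(m+1,n−1) ). -/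
/-!
If `det(u, v, w) ≠ 0`, the vectors `v ⨯₃ w, w ⨯₃ u, u ⨯₃ v` form the basis dual to `u, v, w`
(scaled by the determinant), so every `x` expands as
`det(u, v, w) • x = ⟨u, x⟩ • v ⨯₃ w + ⟨v, x⟩ • w ⨯₃ u + ⟨w, x⟩ • u ⨯₃ v`.
When `x ⟂ v` the middle term drops and `x` is `v ⨯₃` a combination of `u` and `w`.
Each edge of the lattice is orthogonal to the co-normal at its foot, and applying this to
the two edges leaving `(m, k)`, with the triangles based at `(m - 1, k)` and `(m, k - 1)`,
gives the two Lelieuvre relations, the coefficients being the dual coordinates. Since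
`⟨n(m, k), r⟩` takes equal values at `(m, k)`, `(m + 1, k)`, `(m, k + 1)`, the coordinate `s`
may be read off either of the two edges ending at `(m + 1, k + 1)`.
-/

open Matrix

theorem det3_eq_dotProduct_cross (u v w : Fin 3 → ℝ) : det3 u v w = u ⬝ᵥ v ⨯₃ w :=
  (triple_product_eq_det u v w).symm

theorem det3_rotate (u v w : Fin 3 → ℝ) : det3 v w u = det3 u v w := by
  rw [det3_eq_dotProduct_cross, det3_eq_dotProduct_cross, triple_product_permutation u]

theorem det3_smul_eq (u v w x : Fin 3 → ℝ) :
    det3 u v w • x = (u ⬝ᵥ x) • v ⨯₃ w + (v ⬝ᵥ x) • w ⨯₃ u + (w ⬝ᵥ x) • u ⨯₃ v := by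
  rw [det3_eq_dotProduct_cross]
  ext i
  fin_cases i <;>
    simp only [dotProduct, cross_apply, Fin.sum_univ_three, Fin.isValue, cons_val_zero, cons_val_one,
      cons_val, Fin.zero_eta, Fin.mk_one, Fin.reduceFinMk, Pi.smul_apply, Pi.add_apply, smul_eq_mul,
      smul_cons, smul_empty, add_cons, head_cons, tail_cons, empty_add_empty] <;>
    ring

section

variable {u v w x : Fin 3 → ℝ}

theorem det3_smul_eq_cross_of_dotProduct_eq_zero (h : v ⬝ᵥ x = 0) :
    det3 u v w • x = v ⨯₃ ((u ⬝ᵥ x) • w - (w ⬝ᵥ x) • u) := by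
  rw [det3_smul_eq, h, zero_smul, add_zero, map_sub, map_smul, map_smul, ← cross_anticomm v u,
    smul_neg, sub_eq_add_neg]

theorem eq_cross_of_dotProduct_eq_zero (hD : det3 u v w ≠ 0) (h : v ⬝ᵥ x = 0) :
    x = v ⨯₃ ((-(w ⬝ᵥ x) / det3 u v w) • u + ((u ⬝ᵥ x) / det3 u v w) • w) := by
  apply smul_right_injective _ hD
  simp only [det3_smul_eq_cross_of_dotProduct_eq_zero h, ← LinearMap.map_smul]
  congr 1
  match_scalars <;> field_simp

theorem eq_neg_cross_of_dotProduct_eq_zero (hD : det3 u v w ≠ 0) (h : w ⬝ᵥ x = 0) :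
    x = -(w ⨯₃ ((-(v ⬝ᵥ x) / det3 u v w) • u + ((u ⬝ᵥ x) / det3 u v w) • v)) := by
  rw [← det3_rotate] at hD ⊢
  apply smul_right_injective _ hD
  simp only [det3_smul_eq_cross_of_dotProduct_eq_zero h, smul_neg, ← LinearMap.map_smul, ← map_neg]
  congr 1
  match_scalars <;> field_simp

end

/-- Discrete Lelieuvre decomposition for a generic 2D lattice: if `n` is a
co-normal field to the lower triangles of the lattice `r` and
`V(m,k) = det(n(m,k), n(m+1,k), n(m,k+1)) ≠ 0`, then
`⟨n(m,k), Δ_n r(m+1,k)⟩ = ⟨n(m,k), Δ_m r(m,k+1)⟩`, and the coefficients `a, b, s`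
defined from `r` and `n` satisfy the discrete Lelieuvre relations. -/
theorem discrete_lelieuvre_decomposition
    (r n : ℤ → ℤ → (Fin 3 → ℝ))
    (horth : ∀ m k : ℤ,
      n m k ⬝ᵥ (r (m + 1) k - r m k) = 0 ∧ n m k ⬝ᵥ (r m (k + 1) - r m k) = 0)
    (hV : ∀ m k : ℤ, det3 (n m k) (n (m + 1) k) (n m (k + 1)) ≠ 0)
    (a b s : ℤ → ℤ → ℝ)
    (ha : ∀ m k : ℤ, a m k
      = -(n m (k + 1) ⬝ᵥ (r (m + 1) (k + 1) - r (m + 1) k))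
          / det3 (n m k) (n (m + 1) k) (n m (k + 1)))
    (hb : ∀ m k : ℤ, b m k
      = -(n (m + 1) k ⬝ᵥ (r (m + 1) (k + 1) - r m (k + 1)))
          / det3 (n m k) (n (m + 1) k) (n m (k + 1)))
    (hs : ∀ m k : ℤ, s m k
      = (n m k ⬝ᵥ (r (m + 1) (k + 1) - r (m + 1) k))
          / det3 (n m k) (n (m + 1) k) (n m (k + 1))) :
    (∀ m k : ℤ,
      n m k ⬝ᵥ (r (m + 1) (k + 1) - r (m + 1) k)
        = n m k ⬝ᵥ (r (m + 1) (k + 1) - r m (k + 1))) ∧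
    (∀ m k : ℤ,
      r m (k + 1) - r m k
        = n m k ⨯₃ (a (m - 1) k • n (m - 1) k + s (m - 1) k • n (m - 1) (k + 1)) ∧
      r (m + 1) k - r m k
        = -(n m k ⨯₃ (b m (k - 1) • n m (k - 1) + s m (k - 1) • n (m + 1) (k - 1)))) := by
  have hdiag : ∀ m k : ℤ,
      n m k ⬝ᵥ (r (m + 1) (k + 1) - r (m + 1) k)
        = n m k ⬝ᵥ (r (m + 1) (k + 1) - r m (k + 1)) := by
    intro m k
    obtain ⟨h₁, h₂⟩ := horth m k
    simp only [dotProduct_sub] at h₁ h₂ ⊢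
    linarith
  refine ⟨hdiag, fun m k => ⟨?_, ?_⟩⟩
  · obtain ⟨m, rfl⟩ : ∃ m', m = m' + 1 := ⟨m - 1, by ring⟩
    rw [add_sub_cancel_right, ha, hs]
    exact eq_cross_of_dotProduct_eq_zero (hV m k) (horth (m + 1) k).2
  · obtain ⟨k, rfl⟩ : ∃ k', k = k' + 1 := ⟨k - 1, by ring⟩
    rw [add_sub_cancel_right, hb, hs, hdiag]
    exact eq_neg_cross_of_dotProduct_eq_zero (hV m k) (horth m (k + 1)).1
end

section
/- Converse discrete Lelieuvre construction for the 7-point scheme: let n : ℤ² → ℝ³ and a, b, s, f : ℤ² → ℝ satisfy, for all (m,n), a(m,n)·n(m+1,n) + a(m−1,n)·n(m−1,n) + b(m,n)·n(m,n+1) + b(m,n−1)·n(m,n−1) + s(m−1,n)·n(m−1,n+1) + s(m,n−1)·n(m+1,n−1) = f(m,n)·n(m,n). Then there exists r : ℤ² → ℝ³ such that for all (m,n): Δ_n r(m,n) = n(m,n) × ( a(m−1,n)·n(m−1,n) + s(m−1,n)·n(m−1,n+1) ) and Δ_m r(m,n) = −n(m,n) × ( b(m,n−1)·n(m,n−1)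 + s(m,n−1)·n(m+1,n−1) ); moreover any such r satisfies ⟨n(m,n), Δ_m r(m,n)⟩ = 0 = ⟨n(m,n), Δ_n r(m,n)⟩ for all (m,n), i.e. r is a 2D lattice having n as a lower co-normal field. -/
/-!
The two Lelieuvre formulas prescribe the increments of `r` in the two lattice directions, i.e. a
discrete `1`-form `(H, G)` on `ℤ²`, and `r` exists iff this form is closed:
`G(m+1,k) - G(m,k) = H(m,k+1) - H(m,k)`. In that difference the `s`-terms cancel in pairs, and
what remains is `-n(m,k) × L(m,k)`, where `L(m,k)` is the left-hand side of the 7-point scheme;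
the scheme makes `L(m,k)` parallel to `n(m,k)`, so the cross product vanishes. Orthogonality of
`n` to the increments is immediate, since they are cross products with `n`.
-/

open Finset Matrix

theorem Int.eq_of_forall_add_one_eq {α : Sort*} {f : ℤ → α} (hf : ∀ t, f (t + 1) = f t) (t : ℤ) :
    f t = f 0 := by
  induction t using Int.induction_on with
  | zero => rfl
  | succ i ih => rw [hf, ih]
  | pred i ih => rw [← ih, ← hf (-(i : ℤ) - 1), sub_add_cancel]

section DiscretePoincare

variable {M : Type*} [AddCommGroup M]

noncomputable def intPrimitive (g : ℤ → M) (t : ℤ) : M :=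
  ∑ i ∈ Ico 0 t, g i - ∑ i ∈ Ico t 0, g i

@[simp]
theorem intPrimitive_zero (g : ℤ → M) : intPrimitive g 0 = 0 := by
  simp [intPrimitive]

theorem intPrimitive_add_one_sub (g : ℤ → M) (t : ℤ) :
    intPrimitive g (t + 1) - intPrimitive g t = g t := by
  unfold intPrimitive
  rcases le_or_gt 0 t with ht | ht
  · rw [Ico_eq_empty_of_le (by omega : (0 : ℤ) ≤ t + 1), Ico_eq_empty_of_le ht,
      ← sum_Ico_add_eq_sum_Ico_add_one ht]
    abel
  · rw [Ico_eq_empty_of_le (by omega : t + 1 ≤ 0), Ico_eq_empty_of_le ht.le,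
      ← insert_Ico_add_one_left_eq_Ico ht, sum_insert (by simp)]
    abel

theorem exists_potential_of_closed (G H : ℤ → ℤ → M)
    (hclosed : ∀ m k, G (m + 1) k - G m k = H m (k + 1) - H m k) :
    ∃ r : ℤ → ℤ → M, ∀ m k, r m (k + 1) - r m k = G m k ∧ r (m + 1) k - r m k = H m k := by
  refine ⟨fun m k => intPrimitive (H · 0) m + intPrimitive (G m) k, fun m k => ⟨?_, ?_⟩⟩
  · simp only [add_sub_add_left_eq_sub, intPrimitive_add_one_sub]
  · set D : ℤ → M := fun t => intPrimitive (G (m + 1)) t - intPrimitive (G m) t - H m t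
    have hD : ∀ t, D (t + 1) = D t := fun t => by
      have h := hclosed m t
      rw [← intPrimitive_add_one_sub (G (m + 1)), ← intPrimitive_add_one_sub (G m)] at h
      linear_combination (norm := module) h
    have hconst : D k = D 0 := Int.eq_of_forall_add_one_eq hD k
    simp only [D, intPrimitive_zero, sub_zero, zero_sub, sub_eq_iff_eq_add] at hconst
    rw [add_sub_add_comm, intPrimitive_add_one_sub, hconst]
    abel

end DiscretePoincare

theorem lelieuvre_form_closed {n : ℤ → ℤ → (Fin 3 → ℝ)} {a b s f : ℤ → ℤ → ℝ} {m k : ℤ}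
    (hscheme : a m k • n (m + 1) k + a (m - 1) k • n (m - 1) k
        + b m k • n m (k + 1) + b m (k - 1) • n m (k - 1)
        + s (m - 1) k • n (m - 1) (k + 1) + s m (k - 1) • n (m + 1) (k - 1)
      = f m k • n m k) :
    n (m + 1) k ⨯₃ (a m k • n m k + s m k • n m (k + 1))
        - n m k ⨯₃ (a (m - 1) k • n (m - 1) k + s (m - 1) k • n (m - 1) (k + 1))
      = -(n m (k + 1) ⨯₃ (b m k • n m k + s m k • n (m + 1) k))
        - -(n m k ⨯₃ (b m (k - 1) • n m (k - 1) + s m (k - 1) • n (m + 1) (k - 1))) := by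
  have hcross := congrArg (n m k ⨯₃ ·) hscheme
  simp only [map_add, map_smul, cross_self, smul_zero] at hcross ⊢
  rw [← cross_anticomm (n m k) (n (m + 1) k), ← cross_anticomm (n m k) (n m (k + 1)),
    ← cross_anticomm (n (m + 1) k) (n m (k + 1))]
  linear_combination (norm := module) -hcross

/-- Converse discrete Lelieuvre construction for the 7-point scheme: if the
co-normal field `n` satisfies the vector 7-point scheme, then there exists a
lattice `r` satisfying the discrete Lelieuvre relations, and any such `r` has `n`
as a lower co-normal field. -/
theorem converse_discrete_lelieuvre_7point
    (n : ℤ → ℤ → (Fin 3 → ℝ)) (a b s f : ℤ → ℤ → ℝ)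
    (hscheme : ∀ m k : ℤ,
      a m k • n (m + 1) k + a (m - 1) k • n (m - 1) k
        + b m k • n m (k + 1) + b m (k - 1) • n m (k - 1)
        + s (m - 1) k • n (m - 1) (k + 1) + s m (k - 1) • n (m + 1) (k - 1)
      = f m k • n m k) :
    (∃ r : ℤ → ℤ → (Fin 3 → ℝ), ∀ m k : ℤ,
        r m (k + 1) - r m k
          = n m k ⨯₃ (a (m - 1) k • n (m - 1) k + s (m - 1) k • n (m - 1) (k + 1)) ∧
        r (m + 1) k - r m k
          = -(n m k ⨯₃ (b m (k - 1) • n m (k - 1) + s m (k - 1) • n (m + 1) (k - 1)))) ∧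
    (∀ r : ℤ → ℤ → (Fin 3 → ℝ),
      (∀ m k : ℤ,
        r m (k + 1) - r m k
          = n m k ⨯₃ (a (m - 1) k • n (m - 1) k + s (m - 1) k • n (m - 1) (k + 1)) ∧
        r (m + 1) k - r m k
          = -(n m k ⨯₃ (b m (k - 1) • n m (k - 1) + s m (k - 1) • n (m + 1) (k - 1)))) →
      ∀ m k : ℤ,
        n m k ⬝ᵥ (r (m + 1) k - r m k) = 0 ∧ n m k ⬝ᵥ (r m (k + 1) - r m k) = 0) := by
  refine ⟨exists_potential_of_closed _ _ fun m k => ?_, fun r hr m k => ?_⟩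
  · simpa only [add_sub_cancel_right] using lelieuvre_form_closed (hscheme m k)
  · rw [(hr m k).1, (hr m k).2, dotProduct_neg, dot_self_cross, dot_self_cross, neg_zero]
    exact ⟨rfl, rfl⟩
end

section
/- Converse Lelieuvre construction for the 5-point scheme: let N : ℤ² → ℝ³ and a, b : ℤ² → ℝ satisfy, for all (m,n), ( a(m,n)·N(m+1,n) + a(m−1,n)·N(m−1,n) + b(m,n)·N(m,n+1) + b(m,n−1)·N(m,n−1) ) × N(m,n) = 0 (in particular this holds when N solves the self-adjoint 5-point scheme a(m,n)N(m+1,n) + a(m−1,n)N(m−1,n) + b(m,n)N(m,n+1) + b(m,n−1)N(m,n−1) = f(m,n)N(m,n) componentwise for some f : ℤ² → ℝ). Then there exists r : ℤ² → ℝ³ with Δ_m r(m,n) = −b(m,n−1)·( N(m,n) × N(m,n−1) ) and Δ_n r(m,n) = a(m−1,n)·( N(m,n) × N(m−1,n) ) for all (m,n); moreover any such r satisfies ⟨N(m,n), Δ_m r(m,n)⟩ = 0, ⟨N(m,n), Δ_n r(m,n)⟩ = 0 and ⟨N(m,n), Δ_m Δ_n r(m,n)⟩ = 0 for all (m,n),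 i.e. r is a 2D quadrilateral lattice having N as a co-normal field. -/
open Matrix

/-!
The Lelieuvre formulas prescribe the two lattice differences of `r` as a discrete
one-form `(U, V)` on `ℤ²`. Its discrete curl `Δ_m V - Δ_n U` is the five-point
expression crossed with `N m k`, so the hypothesis says exactly that the form
is closed, and closed forms on `ℤ²` are exact. Every difference of `r` is a multiple of a
cross product with `N m k`, hence orthogonal to `N m k`; this includes the mixed
difference, which equals `Δ_m V`.
-/

theorem Int.exists_zero_and_sub_eq {E : Type*} [AddCommGroup E] (s : ℤ → E) :
    ∃ f : ℤ → E, f 0 = 0 ∧ ∀ n : ℤ, f (n + 1) - f n = s n := by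
  refine ⟨fun n => ∑ i ∈ Finset.Ico 0 n, s i - ∑ i ∈ Finset.Ico n 0, s i, by simp,
    fun n => ?_⟩
  rcases le_or_gt 0 n with hn | hn
  · simp only [Finset.Ico_eq_empty_of_le hn, Finset.Ico_eq_empty_of_le (by omega : 0 ≤ n + 1),
      ← Finset.sum_Ico_add_eq_sum_Ico_add_one hn]
    abel
  · simp only [Finset.Ico_eq_empty_of_le hn.le, Finset.Ico_eq_empty_of_le (by omega : n + 1 ≤ 0),
      ← Finset.insert_Ico_add_one_left_eq_Ico hn,
      Finset.sum_insert (by simp : n ∉ Finset.Ico (n + 1) 0)]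
    abel

theorem exists_potential_of_discrete_curl_eq_zero {E : Type*} [AddCommGroup E]
    (U V : ℤ → ℤ → E) (hUV : ∀ m k, U m (k + 1) - U m k = V (m + 1) k - V m k) :
    ∃ r : ℤ → ℤ → E, ∀ m k,
      r (m + 1) k - r m k = U m k ∧ r m (k + 1) - r m k = V m k := by
  obtain ⟨c, -, hc⟩ := Int.exists_zero_and_sub_eq fun m => U m 0
  choose g hg0 hg using fun m => Int.exists_zero_and_sub_eq (V m)
  refine ⟨fun m k => c m + g m k, fun m k => ⟨?_, by simp [hg]⟩⟩
  set D : ℤ → E := fun j => (c (m + 1) + g (m + 1) j) - (c m + g m j) - U m j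
  have hD : Function.Periodic D 1 := fun j => by
    rw [← sub_eq_zero]
    calc D (j + 1) - D j
        = (g (m + 1) (j + 1) - g (m + 1) j) - (g m (j + 1) - g m j)
          - (U m (j + 1) - U m j) := by simp only [D]; abel
      _ = 0 := by rw [hg, hg, hUV, sub_self]
  have hD0 : D 0 = 0 := by simp [D, hg0, hc]
  simpa [D, sub_eq_zero, hD0] using hD.int_mul_eq k

section Lelieuvre

variable (N : ℤ → ℤ → Fin 3 → ℝ) (a b : ℤ → ℤ → ℝ)

def fivePointOperator (m k : ℤ) : Fin 3 → ℝ :=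
  a m k • N (m + 1) k + a (m - 1) k • N (m - 1) k
    + b m k • N m (k + 1) + b m (k - 1) • N m (k - 1)

def lelieuvreDiffM (m k : ℤ) : Fin 3 → ℝ := -(b m (k - 1) • (N m k ⨯₃ N m (k - 1)))

def lelieuvreDiffN (m k : ℤ) : Fin 3 → ℝ := a (m - 1) k • (N m k ⨯₃ N (m - 1) k)

theorem lelieuvre_discrete_curl_eq (m k : ℤ) :
    (lelieuvreDiffN N a (m + 1) k - lelieuvreDiffN N a m k)
      - (lelieuvreDiffM N b m (k + 1) - lelieuvreDiffM N b m k)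
      = fivePointOperator N a b m k ⨯₃ N m k := by
  simp only [lelieuvreDiffM, lelieuvreDiffN, fivePointOperator, add_sub_cancel_right, map_add,
    _root_.map_smul, LinearMap.add_apply, LinearMap.smul_apply,
    ← cross_anticomm (N m k) (N m (k - 1)), ← cross_anticomm (N m k) (N (m - 1) k)]
  module

theorem dotProduct_lelieuvreDiffM (m k : ℤ) : N m k ⬝ᵥ lelieuvreDiffM N b m k = 0 := by
  simp [lelieuvreDiffM, dotProduct_smul, dot_self_cross]

theorem dotProduct_lelieuvreDiffN (m k : ℤ) : N m k ⬝ᵥ lelieuvreDiffN N a m k = 0 := by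
  simp [lelieuvreDiffN, dotProduct_smul, dot_self_cross]

theorem dotProduct_lelieuvreDiffN_add_one_sub (m k : ℤ) :
    N m k ⬝ᵥ (lelieuvreDiffN N a (m + 1) k - lelieuvreDiffN N a m k) = 0 := by
  simp [lelieuvreDiffN, dotProduct_sub, dotProduct_smul, dot_self_cross, dot_cross_self]

end Lelieuvre

/-- Converse Lelieuvre construction for the 5-point scheme: if the co-normal field
`N` satisfies the self-adjoint 5-point scheme up to a scalar multiple of `N`, then
there exists a lattice `r` given by the discrete Lelieuvre formulas, and any such
`r` is a 2D quadrilateral lattice having `N` as a co-normal field. -/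
theorem converse_lelieuvre_5point
    (N : ℤ → ℤ → (Fin 3 → ℝ)) (a b : ℤ → ℤ → ℝ)
    (h : ∀ m k : ℤ,
      (a m k • N (m + 1) k + a (m - 1) k • N (m - 1) k
        + b m k • N m (k + 1) + b m (k - 1) • N m (k - 1)) ⨯₃ N m k = 0) :
    (∃ r : ℤ → ℤ → (Fin 3 → ℝ), ∀ m k : ℤ,
        r (m + 1) k - r m k = -(b m (k - 1) • (N m k ⨯₃ N m (k - 1))) ∧
        r m (k + 1) - r m k = a (m - 1) k • (N m k ⨯₃ N (m - 1) k)) ∧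
    (∀ r : ℤ → ℤ → (Fin 3 → ℝ),
      (∀ m k : ℤ,
        r (m + 1) k - r m k = -(b m (k - 1) • (N m k ⨯₃ N m (k - 1))) ∧
        r m (k + 1) - r m k = a (m - 1) k • (N m k ⨯₃ N (m - 1) k)) →
      ∀ m k : ℤ,
        N m k ⬝ᵥ (r (m + 1) k - r m k) = 0 ∧
        N m k ⬝ᵥ (r m (k + 1) - r m k) = 0 ∧
        N m k ⬝ᵥ (r (m + 1) (k + 1) - r (m + 1) k - r m (k + 1) + r m k) = 0) := by
  have hclosed : ∀ m k, lelieuvreDiffM N b m (k + 1) - lelieuvreDiffM N b m k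
      = lelieuvreDiffN N a (m + 1) k - lelieuvreDiffN N a m k := fun m k =>
    (sub_eq_zero.mp ((lelieuvre_discrete_curl_eq N a b m k).trans (h m k))).symm
  refine ⟨exists_potential_of_discrete_curl_eq_zero _ _ hclosed, fun r hr m k => ?_⟩
  have hΔm : r (m + 1) k - r m k = lelieuvreDiffM N b m k := (hr m k).1
  have hΔn : r m (k + 1) - r m k = lelieuvreDiffN N a m k := (hr m k).2
  have hΔn' : r (m + 1) (k + 1) - r (m + 1) k = lelieuvreDiffN N a (m + 1) k := (hr (m + 1) k).2
  have hΔmΔn : r (m + 1) (k + 1) - r (m + 1) k - r m (k + 1) + r m k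
      = lelieuvreDiffN N a (m + 1) k - lelieuvreDiffN N a m k := by
    rw [← hΔn', ← hΔn]; abel
  rw [hΔm, hΔn, hΔmΔn]
  exact ⟨dotProduct_lelieuvreDiffM N b m k, dotProduct_lelieuvreDiffN N a m k,
    dotProduct_lelieuvreDiffN_add_one_sub N a m k⟩
end

section
/- Converse Lelieuvre construction for a conjugate net: let N : ℝ² → ℝ³ be twice continuously differentiable and A, B : ℝ² → ℝ continuously differentiable, F : ℝ² → ℝ, with (A·N_x)_x + (B·N_y)_y = F·N at every point of ℝ². Then ∂_y( B·(N_y × N) ) = ∂_x( A·(N × N_x) ) everywhere, and there exists R : ℝ² → ℝ³ with R_x = B·(N_y × N) and R_y = A·(N × N_x) everywhere; moreover any such R satisfies ⟨N, R_x⟩ = 0, ⟨N, R_y⟩ = 0 and ⟨N, R_xy⟩ = 0 everywhere, i.e. R is a conjugate net having N as a co-normal field. -/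
/-!
By the product rule, `(B (N_y × N))_y = (B N_y)_y × N` and `(A (N × N_x))_x = N × (A N_x)_x`,
the remaining terms being multiples of `N_y × N_y` and `N_x × N_x`. Substituting
`(A N_x)_x = F N - (B N_y)_y` and using `N × N = 0` shows that the two agree, i.e. the 1-form
`B (N_y × N) dx + A (N × N_x) dy` is closed, hence exact on the plane by the Poincaré lemma.
Finally `R_x`, `R_y` and `R_xy = (B N_y)_y × N` are cross products with `N`.
-/

open Matrix

section Cross

variable {E : Type*} [NormedAddCommGroup E] [NormedSpace ℝ E] {u v : E → Fin 3 → ℝ}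

theorem fderiv_cross_apply_s19 {p : E} (hu : DifferentiableAt ℝ u p) (hv : DifferentiableAt ℝ v p)
    (w : E) :
    fderiv ℝ (fun q => u q ⨯₃ v q) p w = fderiv ℝ u p w ⨯₃ v p + u p ⨯₃ fderiv ℝ v p w := by
  have h := (crossProduct (R := ℝ)).toContinuousBilinearMap.fderiv_of_bilinear hu hv
  simp only [LinearMap.toContinuousBilinearMap_apply] at h
  simp [h, add_comm]

theorem Differentiable.cross (hu : Differentiable ℝ u) (hv : Differentiable ℝ v) :
    Differentiable ℝ (fun q => u q ⨯₃ v q) := fun p =>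
  ((crossProduct (R := ℝ)).toContinuousBilinearMap.hasFDerivAt_of_bilinear (hu p).hasFDerivAt
    (hv p).hasFDerivAt).differentiableAt

end Cross

section Plane

variable {M : Type*} [NormedAddCommGroup M] [NormedSpace ℝ M] {f g : ℝ × ℝ → M}

noncomputable def planeOneForm (f g : ℝ × ℝ → M) (p : ℝ × ℝ) : ℝ × ℝ →L[ℝ] M :=
  (ContinuousLinearMap.fst ℝ ℝ ℝ).smulRight (f p) +
    (ContinuousLinearMap.snd ℝ ℝ ℝ).smulRight (g p)

theorem planeOneForm_apply (p v : ℝ × ℝ) : planeOneForm f g p v = v.1 • f p + v.2 • g p := rfl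

theorem hasFDerivAt_planeOneForm {p : ℝ × ℝ} (hf : DifferentiableAt ℝ f p)
    (hg : DifferentiableAt ℝ g p) :
    HasFDerivAt (planeOneForm f g)
      ((ContinuousLinearMap.smulRightL ℝ _ M (ContinuousLinearMap.fst ℝ ℝ ℝ)).comp (fderiv ℝ f p) +
        (ContinuousLinearMap.smulRightL ℝ _ M (ContinuousLinearMap.snd ℝ ℝ ℝ)).comp
          (fderiv ℝ g p)) p :=
  ((ContinuousLinearMap.smulRightL ℝ _ M (ContinuousLinearMap.fst ℝ ℝ ℝ)).hasFDerivAt.comp p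
      hf.hasFDerivAt).add
    ((ContinuousLinearMap.smulRightL ℝ _ M (ContinuousLinearMap.snd ℝ ℝ ℝ)).hasFDerivAt.comp p
      hg.hasFDerivAt)

theorem fderiv_planeOneForm_apply_apply {p : ℝ × ℝ} (hf : DifferentiableAt ℝ f p)
    (hg : DifferentiableAt ℝ g p) (u v : ℝ × ℝ) :
    fderiv ℝ (planeOneForm f g) p u v = v.1 • fderiv ℝ f p u + v.2 • fderiv ℝ g p u := by
  rw [(hasFDerivAt_planeOneForm hf hg).fderiv]
  rfl

theorem fderiv_planeOneForm_symm {p : ℝ × ℝ} (hf : DifferentiableAt ℝ f p)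
    (hg : DifferentiableAt ℝ g p) (hfg : fderiv ℝ f p (0, 1) = fderiv ℝ g p (1, 0))
    (u v : ℝ × ℝ) :
    fderiv ℝ (planeOneForm f g) p u v = fderiv ℝ (planeOneForm f g) p v u := by
  have hbasis (w : ℝ × ℝ) : w = w.1 • ((1 : ℝ), (0 : ℝ)) + w.2 • ((0 : ℝ), (1 : ℝ)) := by
    ext <;> simp
  simp only [fderiv_planeOneForm_apply_apply hf hg]
  rw [hbasis u, hbasis v]
  simp only [map_add, map_smul, Prod.fst_add, Prod.snd_add, Prod.smul_fst, Prod.smul_snd,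
    smul_eq_mul, mul_one, mul_zero, add_zero, zero_add, hfg]
  module

end Plane

theorem exists_pdx_pdy_eq {f g : ℝ × ℝ → Fin 3 → ℝ} (hf : Differentiable ℝ f)
    (hg : Differentiable ℝ g) (hfg : ∀ p, pdy f p = pdx g p) :
    ∃ R : ℝ × ℝ → Fin 3 → ℝ, ∀ p, pdx R p = f p ∧ pdy R p = g p := by
  obtain ⟨R, hR⟩ := convex_univ.exists_forall_hasFDerivAt_of_fderiv_symmetric isOpen_univ
    (fun p _ => (hasFDerivAt_planeOneForm (hf p) (hg p)).differentiableAt.differentiableWithinAt)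
    (fun p _ => fderiv_planeOneForm_symm (hf p) (hg p) (hfg p))
  refine ⟨R, fun p => ⟨?_, ?_⟩⟩ <;>
    simp [pdx, pdy, (hR p (Set.mem_univ p)).fderiv, planeOneForm_apply]

section Lelieuvre

variable {c : ℝ × ℝ → ℝ} {N : ℝ × ℝ → Fin 3 → ℝ} {p : ℝ × ℝ}

theorem pdy_smul_pdy_cross (hc : DifferentiableAt ℝ c p) (hN : DifferentiableAt ℝ N p)
    (hNy : DifferentiableAt ℝ (pdy N) p) :
    pdy (fun q => c q • (pdy N q ⨯₃ N q)) p = pdy (fun q => c q • pdy N q) p ⨯₃ N p := by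
  have hfun : (fun q => c q • (pdy N q ⨯₃ N q)) = fun q => (c q • pdy N q) ⨯₃ N q := by
    simp only [map_smul, LinearMap.smul_apply]
  rw [hfun, pdy, fderiv_cross_apply_s19 (hc.fun_smul hNy) hN, ← pdy, ← pdy]
  simp only [map_smul, LinearMap.smul_apply, cross_self, smul_zero, add_zero]

theorem pdx_smul_cross_pdx (hc : DifferentiableAt ℝ c p) (hN : DifferentiableAt ℝ N p)
    (hNx : DifferentiableAt ℝ (pdx N) p) :
    pdx (fun q => c q • (N q ⨯₃ pdx N q)) p = N p ⨯₃ pdx (fun q => c q • pdx N q) p := by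
  have hfun : (fun q => c q • (N q ⨯₃ pdx N q)) = fun q => N q ⨯₃ (c q • pdx N q) := by
    simp only [map_smul]
  rw [hfun, pdx, fderiv_cross_apply_s19 hN (hc.fun_smul hNx), ← pdx, ← pdx]
  simp only [map_smul, cross_self, smul_zero, zero_add]

end Lelieuvre

/-- Converse Lelieuvre construction for a conjugate net: if `N` satisfies
`(A N_x)_x + (B N_y)_y = F N`, then `∂_y(B (N_y × N)) = ∂_x(A (N × N_x))`, a
position vector `R` with `R_x = B (N_y × N)`, `R_y = A (N × N_x)` exists, and any
such `R` is a conjugate net having `N` as a co-normal field. -/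
theorem converse_lelieuvre_conjugate_net
    (N : ℝ × ℝ → (Fin 3 → ℝ)) (A B : ℝ × ℝ → ℝ) (F : ℝ × ℝ → ℝ)
    (hN : ContDiff ℝ 2 N) (hA : ContDiff ℝ 1 A) (hB : ContDiff ℝ 1 B)
    (heq : ∀ p,
      pdx (fun q => A q • pdx N q) p + pdy (fun q => B q • pdy N q) p = F p • N p) :
    (∀ p, pdy (fun q => B q • (pdy N q ⨯₃ N q)) p
        = pdx (fun q => A q • (N q ⨯₃ pdx N q)) p) ∧
    (∃ R : ℝ × ℝ → (Fin 3 → ℝ), ∀ p,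
        pdx R p = B p • (pdy N p ⨯₃ N p) ∧ pdy R p = A p • (N p ⨯₃ pdx N p)) ∧
    (∀ R : ℝ × ℝ → (Fin 3 → ℝ),
      (∀ p, pdx R p = B p • (pdy N p ⨯₃ N p) ∧ pdy R p = A p • (N p ⨯₃ pdx N p)) →
      ∀ p, N p ⬝ᵥ pdx R p = 0 ∧ N p ⬝ᵥ pdy R p = 0 ∧ N p ⬝ᵥ pdy (pdx R) p = 0) := by
  have hN₁ : Differentiable ℝ N := hN.differentiable two_ne_zero
  have hDN : Differentiable ℝ (fderiv ℝ N) :=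
    (hN.fderiv_right (m := 1) le_rfl).differentiable one_ne_zero
  have hNx : Differentiable ℝ (pdx N) := fun p => (hDN p).clm_apply (differentiableAt_const _)
  have hNy : Differentiable ℝ (pdy N) := fun p => (hDN p).clm_apply (differentiableAt_const _)
  have hA₁ : Differentiable ℝ A := hA.differentiable one_ne_zero
  have hB₁ : Differentiable ℝ B := hB.differentiable one_ne_zero
  have hclosed (p : ℝ × ℝ) : pdy (fun q => B q • (pdy N q ⨯₃ N q)) p
      = pdx (fun q => A q • (N q ⨯₃ pdx N q)) p := by
    rw [pdy_smul_pdy_cross (hB₁ p) (hN₁ p) (hNy p), pdx_smul_cross_pdx (hA₁ p) (hN₁ p) (hNx p),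
      eq_sub_of_add_eq (heq p), map_sub, map_smul, cross_self, smul_zero, zero_sub,
      cross_anticomm]
  refine ⟨hclosed, exists_pdx_pdy_eq (hB₁.smul (hNy.cross hN₁)) (hA₁.smul (hN₁.cross hNx)) hclosed,
    fun R hR p => ⟨?_, ?_, ?_⟩⟩
  · rw [(hR p).1, dotProduct_smul, dot_cross_self, smul_zero]
  · rw [(hR p).2, dotProduct_smul, dot_self_cross, smul_zero]
  · rw [show pdx R = fun q => B q • (pdy N q ⨯₃ N q) from funext fun q => (hR q).1,
      pdy_smul_pdy_cross (hB₁ p) (hN₁ p) (hNy p), dot_cross_self]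
end
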